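/- arXiv:hep-th/9904002 — 4 statements merged into one kernel-verified Lean document; each statement's English description precedes it below -/
import Mathlib

section
/- Let n ≥ 1 and realize a_n in R^{n+1} with er_a = e_a − (1/(n+1))·Σ_j e_j and fundamental weights λ_i = er_1 + … + er_i. For a nonempty subset P = {k_1 < … < k_a} of {1,…,n}, the weight λ = Σ_{j=1}^{a} (−1)^{a−j} λ_{k_j} equals a sum of exactly i = Σ_{j=1}^{a} (−1)^{a−j} k_j distinct vectors from {er_1,…,er_{n+1}}; i.e. λ is a weight of the i-th fundamental representation Λ_i of a_n. -/
/-!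
The coefficient of `er_b` in `λ = ∑_j (-1)^{a-j} λ_{k_j}` is the alternating sum
`∑_{k ∈ P, k > b} (-1)^{#{x ∈ P | x > k}}`, whose terms alternate starting with `+1` at the
largest element, so it is `1` or `0` according as `#{k ∈ P | k > b}` is odd or even.
Hence `λ = ∑_{b ∈ S} er_b` for the set `S` of those `b`, and the same computation with every
`er_b` replaced by `1` gives `#S = ∑_j (-1)^{a-j} k_j`.
-/

open Finset

/-- The vector `er_a = e_a - (1/(n+1)) ∑_j e_j` in `ℝ^{n+1}` (0-based index `a`). -/
noncomputable def er (n a : ℕ) : Fin (n + 1) → ℝ :=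
  fun j => (if (j : ℕ) = a then 1 else 0) - 1 / (n + 1)

/-- The fundamental weight `λ_{i+1} = er_1 + ⋯ + er_{i+1}` (0-based index `i`). -/
noncomputable def lam (n i : ℕ) : Fin (n + 1) → ℝ :=
  ∑ a ∈ Finset.range (i + 1), er n a

/-- The alternating sum `λ = ∑_{j=1}^{a} (-1)^{a-j} λ_{k_j}` of fundamental weights
attached to a nonempty `P = {k_1 < ⋯ < k_a} ⊆ {1, …, n}`. -/
noncomputable def lamAlt (n : ℕ) (P : Finset ℕ) : Fin (n + 1) → ℝ :=
  ∑ k ∈ P, ((-1 : ℝ) ^ (P.filter (fun x => k < x)).card) • lam n (k - 1)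

theorem Finset.sum_neg_one_pow_card_filter_lt {α R : Type*} [LinearOrder α] [Ring R]
    (Q : Finset α) :
    ∑ k ∈ Q, (-1 : R) ^ #{x ∈ Q | k < x} = if Odd #Q then 1 else 0 := by
  induction Q using Finset.induction_on_max with
  | empty => simp
  | insert a s has ih =>
    have ha : a ∉ s := fun h => (has a h).false
    have h_top : {x ∈ insert a s | a < x} = ∅ :=
      filter_eq_empty_iff.2 fun x hx => by
        rcases mem_insert.1 hx with rfl | hx
        exacts [lt_irrefl x, (has x hx).not_gt]
    have h_below : ∀ k ∈ s, #{x ∈ insert a s | k < x} = #{x ∈ s | k < x} + 1 := fun k hk => by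
      rw [filter_insert, if_pos (has k hk), card_insert_of_notMem (by simp [ha])]
    rw [sum_insert ha, h_top, sum_congr rfl fun k hk => by rw [h_below k hk, pow_succ],
      ← sum_mul, ih, card_insert_of_notMem ha]
    by_cases h : Odd #s <;> simp [h, Nat.odd_add_one]

theorem sum_neg_one_pow_card_smul_sum_range {R M : Type*} [Ring R] [AddCommGroup M]
    [Module R M] (v : ℕ → M) {P : Finset ℕ} {N : ℕ} (hP : ∀ k ∈ P, k ≤ N) :
    ∑ k ∈ P, (-1 : R) ^ #{x ∈ P | k < x} • ∑ b ∈ range k, v b =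
      ∑ b ∈ range N with Odd #{k ∈ P | b < k}, v b := by
  have h_upper : ∀ b, ∑ k ∈ P with b < k, (-1 : R) ^ #{x ∈ P | k < x} =
      if Odd #{k ∈ P | b < k} then 1 else 0 := fun b => by
    rw [← sum_neg_one_pow_card_filter_lt]
    refine sum_congr rfl fun k hk => ?_
    rw [filter_filter]
    congr 2
    exact filter_congr fun x _ => ⟨fun hkx => ⟨(mem_filter.1 hk).2.trans hkx, hkx⟩, And.right⟩
  simp_rw [smul_sum]
  rw [sum_comm' (t' := range N) (s' := fun b => {k ∈ P | b < k})]
  · simp_rw [← sum_smul, h_upper, ite_smul, one_smul, zero_smul, sum_filter]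
  · intro k b
    simp only [mem_range, mem_filter]
    exact ⟨fun ⟨hk, hb⟩ => ⟨⟨hk, hb⟩, hb.trans_le (hP k hk)⟩, fun h => h.1⟩

theorem lamAlt_is_fundamental_weight_general (n : ℕ) (P : Finset ℕ)
    (hP : P ⊆ Finset.Icc 1 n) :
    ∃ S : Finset ℕ, S ⊆ Finset.range (n + 1) ∧
      (S.card : ℤ) = ∑ k ∈ P, (-1 : ℤ) ^ (P.filter (fun x => k < x)).card * (k : ℤ) ∧
      lamAlt n P = ∑ b ∈ S, er n b := by
  have hP_le : ∀ k ∈ P, k ≤ n + 1 := fun k hk => by have := mem_Icc.1 (hP hk); omega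
  refine ⟨{b ∈ range (n + 1) | Odd #{k ∈ P | b < k}}, filter_subset _ _, ?_, ?_⟩
  · simpa [mul_comm] using
      (sum_neg_one_pow_card_smul_sum_range (R := ℤ) (fun _ => (1 : ℤ)) hP_le).symm
  · rw [lamAlt, ← sum_neg_one_pow_card_smul_sum_range (R := ℝ) (er n) hP_le]
    refine sum_congr rfl fun k hk => ?_
    rw [lam, Nat.sub_add_cancel (mem_Icc.1 (hP hk)).1]

/-- the weight `λ = ∑_{j=1}^{a} (-1)^{a-j} λ_{k_j}` is a sum of exactly
`i = ∑_{j=1}^{a} (-1)^{a-j} k_j` distinct vectors from `{er_1, …, er_{n+1}}`, i.e.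
it is a weight of the `i`-th fundamental representation of `a_n`. -/
theorem lamAlt_is_fundamental_weight (n : ℕ) (hn : 1 ≤ n) (P : Finset ℕ)
    (hP : P ⊆ Finset.Icc 1 n) (hne : P.Nonempty) :
    ∃ S : Finset ℕ, S ⊆ Finset.range (n + 1) ∧
      (S.card : ℤ) = ∑ k ∈ P, (-1 : ℤ) ^ (P.filter (fun x => k < x)).card * (k : ℤ) ∧
      lamAlt n P = ∑ b ∈ S, er n b :=
  lamAlt_is_fundamental_weight_general n P hP
end

section
/- Let n ≥ 1. The map P ↦ λ(P) = Σ_{j=1}^{a}(−1)^{a−j} λ_{k_j} (for nonempty P = {k_1 < … < k_a} ⊆ {1,…,n}) is a bijection between the 2^n − 1 nonempty subsets of {1,…,n} and the set of positive weights lying in fundamental representations of a_n, where a weight Σ_{b∈S} er_b (S an i-element subset of {1,…,n+1}, 1 ≤ i ≤ n) is called positive if n+1 ∉ S. -/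
open Finset

/-- number of elements of `P` strictly greater than `b` -/
def cnt (P : Finset ℕ) (b : ℕ) : ℕ := (P.filter (fun x => b < x)).card

/-- the set `S` attached to `P` -/
def toS (n : ℕ) (P : Finset ℕ) : Finset ℕ := (Finset.range n).filter (fun b => Odd (cnt P b))

/-- the set `P` attached to `S` -/
def toP (n : ℕ) (S : Finset ℕ) : Finset ℕ :=
  (Finset.Icc 1 n).filter (fun k => ¬((k - 1 ∈ S) ↔ k ∈ S))

lemma toS_subset (n : ℕ) (P : Finset ℕ) : toS n P ⊆ Finset.range n :=
  Finset.filter_subset _ _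

lemma toP_subset (n : ℕ) (S : Finset ℕ) : toP n S ⊆ Finset.Icc 1 n :=
  Finset.filter_subset _ _

lemma altsum (Q : Finset ℕ) :
    ∑ k ∈ Q, ((-1 : ℝ)) ^ ((Q.filter (fun x => k < x)).card)
      = if Odd Q.card then 1 else 0 := by
  induction Q using Finset.strongInduction with
  | _ Q ih =>
    rcases Q.eq_empty_or_nonempty with rfl | hQ
    · simp
    · set m := Q.min' hQ with hm
      have hmQ : m ∈ Q := Q.min'_mem hQ
      rw [← Finset.add_sum_erase _ _ hmQ]
      have h1 : Q.filter (fun x => m < x) = Q.erase m := by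
        ext x
        simp only [mem_filter, mem_erase]
        constructor
        · rintro ⟨hx, hlt⟩; exact ⟨by omega, hx⟩
        · rintro ⟨hne, hx⟩
          exact ⟨hx, lt_of_le_of_ne (Q.min'_le x hx) (Ne.symm hne)⟩
      have h2 : ∀ k ∈ Q.erase m, Q.filter (fun x => k < x)
          = (Q.erase m).filter (fun x => k < x) := by
        intro k hk
        have hmk : m ≤ k := Q.min'_le k (Finset.mem_of_mem_erase hk)
        ext x
        simp only [mem_filter, mem_erase]
        constructor
        · rintro ⟨hx, hlt⟩; exact ⟨⟨by omega, hx⟩, hlt⟩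
        · rintro ⟨⟨_, hx⟩, hlt⟩; exact ⟨hx, hlt⟩
      rw [Finset.sum_congr rfl (fun k hk => by rw [h2 k hk]),
        ih (Q.erase m) (Finset.erase_ssubset hmQ), h1,
        Finset.card_erase_of_mem hmQ]
      have hcard : 1 ≤ Q.card := Finset.card_pos.mpr hQ
      rcases Nat.even_or_odd Q.card with he | ho
      · have h3 : Odd (Q.card - 1) := by
          rcases he with ⟨t, ht⟩; exact ⟨t - 1, by omega⟩
        rw [if_pos h3, if_neg (Nat.not_odd_iff_even.mpr he), h3.neg_one_pow]
        ring
      · have h3 : Even (Q.card - 1) := by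
          rcases ho with ⟨t, ht⟩; exact ⟨t, by omega⟩
        rw [if_neg (Nat.not_odd_iff_even.mpr h3), if_pos ho, h3.neg_one_pow]
        ring

lemma lamAlt_eq (n : ℕ) (P : Finset ℕ) (hP : P ⊆ Finset.Icc 1 n) :
    lamAlt n P = ∑ b ∈ toS n P, er n b := by
  have h1 : ∀ k ∈ P, lam n (k - 1) = ∑ a ∈ Finset.range k, er n a := by
    intro k hk
    have : 1 ≤ k := (Finset.mem_Icc.mp (hP hk)).1
    rw [lam, Nat.sub_add_cancel this]
  unfold lamAlt
  rw [Finset.sum_congr rfl (fun k hk => by rw [h1 k hk, Finset.smul_sum])]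
  rw [Finset.sum_comm' (t' := Finset.range n)
    (s' := fun a => P.filter (fun k => a < k))
    (f := fun k a => ((-1 : ℝ) ^ (P.filter (fun x => k < x)).card) • er n a)
    (by
      intro k a
      simp only [Finset.mem_range, Finset.mem_filter]
      constructor
      · rintro ⟨hk, ha⟩
        have : k ≤ n := (Finset.mem_Icc.mp (hP hk)).2
        exact ⟨⟨hk, ha⟩, by omega⟩
      · rintro ⟨⟨hk, ha⟩, _⟩; exact ⟨hk, ha⟩)]
  rw [toS, Finset.sum_filter]
  refine Finset.sum_congr rfl (fun a _ => ?_)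
  have h2 : ∀ k ∈ P.filter (fun k => a < k), P.filter (fun x => k < x)
      = (P.filter (fun k => a < k)).filter (fun x => k < x) := by
    intro k hk
    obtain ⟨_, hak⟩ := Finset.mem_filter.mp hk
    ext x
    simp only [Finset.mem_filter]
    constructor
    · rintro ⟨hx, hlt⟩; exact ⟨⟨hx, by omega⟩, hlt⟩
    · rintro ⟨⟨hx, _⟩, hlt⟩; exact ⟨hx, hlt⟩
  rw [← Finset.sum_smul,
    Finset.sum_congr rfl (fun k hk => by rw [h2 k hk]),
    altsum]
  unfold cnt
  split <;> simp

lemma sum_er_inj (n : ℕ) {S S' : Finset ℕ} (hS : S ⊆ Finset.range n)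
    (hS' : S' ⊆ Finset.range n)
    (h : ∑ b ∈ S, er n b = ∑ b ∈ S', er n b) : S = S' := by
  have key : ∀ (T : Finset ℕ) (j : Fin (n + 1)),
      (∑ b ∈ T, er n b) j = (if (j : ℕ) ∈ T then (1 : ℝ) else 0) - T.card / (n + 1) := by
    intro T j
    have : (∑ b ∈ T, er n b) j = ∑ b ∈ T, ((if (j : ℕ) = b then (1:ℝ) else 0) - 1 / (n + 1)) := by
      simp [er, Finset.sum_apply]
    rw [this, Finset.sum_sub_distrib, Finset.sum_ite_eq T (j : ℕ) (fun _ => (1:ℝ))]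
    simp [div_eq_mul_inv, mul_comm]
  have hcard : (S.card : ℝ) = S'.card := by
    have := congrFun h (Fin.last n)
    rw [key, key] at this
    have hn1 : ((n : ℝ) + 1) ≠ 0 := by positivity
    have hnS : (n : ℕ) ∉ S := fun hc => by simpa using Finset.mem_range.mp (hS hc)
    have hnS' : (n : ℕ) ∉ S' := fun hc => by simpa using Finset.mem_range.mp (hS' hc)
    simp only [Fin.val_last, if_neg hnS, if_neg hnS'] at this
    field_simp at this
    linarith
  ext x
  constructor
  · intro hx
    have hxn : x < n := Finset.mem_range.mp (hS hx)
    have := congrFun h ⟨x, by omega⟩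
    rw [key, key] at this
    simp only [hcard] at this
    simp only [if_pos hx] at this
    by_contra hx'
    simp only [if_neg hx'] at this
    linarith
  · intro hx
    have hxn : x < n := Finset.mem_range.mp (hS' hx)
    have := congrFun h ⟨x, by omega⟩
    rw [key, key] at this
    simp only [hcard] at this
    simp only [if_pos hx] at this
    by_contra hx'
    simp only [if_neg hx'] at this
    linarith

lemma cnt_step (P : Finset ℕ) (b : ℕ) :
    cnt P b = cnt P (b + 1) + (if b + 1 ∈ P then 1 else 0) := by
  unfold cnt
  have h : P.filter (fun x => b < x)
      = P.filter (fun x => b + 1 < x) ∪ P.filter (fun x => x = b + 1) := by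
    ext x
    simp only [Finset.mem_filter, Finset.mem_union]
    constructor
    · rintro ⟨hx, hlt⟩
      rcases Nat.lt_or_ge (b + 1) x with h' | h'
      · exact Or.inl ⟨hx, h'⟩
      · exact Or.inr ⟨hx, by omega⟩
    · rintro (⟨hx, hlt⟩ | ⟨hx, rfl⟩) <;> exact ⟨hx, by omega⟩
  rw [h, Finset.card_union_of_disjoint]
  · congr 1
    rw [Finset.filter_eq' P (b + 1)]
    split <;> simp
  · rw [Finset.disjoint_filter]
    intro x _ hlt
    omega

lemma cnt_top {n : ℕ} {P : Finset ℕ} (hP : P ⊆ Finset.Icc 1 n) : cnt P n = 0 := by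
  unfold cnt
  rw [Finset.card_eq_zero, Finset.filter_eq_empty_iff]
  intro x hx
  have := Finset.mem_Icc.mp (hP hx)
  omega

lemma toS_toP (n : ℕ) (S : Finset ℕ) (hS : S ⊆ Finset.range n) :
    toS n (toP n S) = S := by
  have hPsub : toP n S ⊆ Finset.Icc 1 n := Finset.filter_subset _ _
  have key : ∀ d b, b + d = n → (Odd (cnt (toP n S) b) ↔ b ∈ S) := by
    intro d
    induction d with
    | zero =>
      intro b hb
      obtain rfl : b = n := by omega
      rw [cnt_top hPsub]
      simp only [Nat.odd_iff]
      constructor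
      · intro h; omega
      · intro h; exact absurd (Finset.mem_range.mp (hS h)) (by omega)
    | succ d ih =>
      intro b hb
      have hbn : b < n := by omega
      have ih' := ih (b + 1) (by omega)
      rw [cnt_step]
      have hmem : b + 1 ∈ toP n S ↔ ¬((b ∈ S) ↔ b + 1 ∈ S) := by
        unfold toP
        simp only [Finset.mem_filter, Finset.mem_Icc, Nat.add_sub_cancel]
        constructor
        · rintro ⟨_, h⟩; exact h
        · intro h; exact ⟨⟨by omega, by omega⟩, h⟩
      by_cases hb1 : b + 1 ∈ toP n S
      · rw [if_pos hb1, Nat.odd_add_one]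
        have := hmem.mp hb1
        tauto
      · rw [if_neg hb1]
        have := hmem.not.mp hb1
        push_neg at this
        tauto
  ext b
  unfold toS
  simp only [Finset.mem_filter, Finset.mem_range]
  constructor
  · rintro ⟨hb, hodd⟩
    exact (key (n - b) b (by omega)).mp hodd
  · intro hb
    have hbn : b < n := Finset.mem_range.mp (hS hb)
    exact ⟨hbn, (key (n - b) b (by omega)).mpr hb⟩

lemma toP_toS (n : ℕ) (P : Finset ℕ) (hP : P ⊆ Finset.Icc 1 n) :
    toP n (toS n P) = P := by
  have hmemS : ∀ k ≤ n, (k ∈ toS n P ↔ Odd (cnt P k)) := by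
    intro k hk
    unfold toS
    simp only [Finset.mem_filter, Finset.mem_range]
    rcases Nat.lt_or_ge k n with h | h
    · tauto
    · have hkn : k = n := by omega
      subst hkn
      rw [cnt_top hP]
      simp [Nat.odd_iff]
  ext k
  unfold toP
  simp only [Finset.mem_filter, Finset.mem_Icc]
  constructor
  · rintro ⟨⟨hk1, hkn⟩, h⟩
    rw [hmemS (k - 1) (by omega), hmemS k hkn] at h
    by_contra hkP
    apply h
    have := cnt_step P (k - 1)
    rw [if_neg (by rwa [Nat.sub_add_cancel hk1]), Nat.sub_add_cancel hk1] at this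
    rw [this]
    simp
  · intro hkP
    have hk := Finset.mem_Icc.mp (hP hkP)
    refine ⟨hk, ?_⟩
    rw [hmemS (k - 1) (by omega), hmemS k hk.2]
    have := cnt_step P (k - 1)
    rw [if_pos (by rwa [Nat.sub_add_cancel hk.1]), Nat.sub_add_cancel hk.1] at this
    rw [this]
    simp [Nat.odd_add_one, Nat.odd_iff, Nat.even_iff]
    omega

lemma toS_nonempty (n : ℕ) {P : Finset ℕ} (hP : P ⊆ Finset.Icc 1 n)
    (hne : P.Nonempty) : (toS n P).Nonempty := by
  set M := P.max' hne with hM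
  have hMP : M ∈ P := P.max'_mem hne
  have hMIcc := Finset.mem_Icc.mp (hP hMP)
  refine ⟨M - 1, ?_⟩
  unfold toS
  simp only [Finset.mem_filter, Finset.mem_range]
  refine ⟨by omega, ?_⟩
  have : P.filter (fun x => M - 1 < x) = {M} := by
    ext x
    simp only [Finset.mem_filter, Finset.mem_singleton]
    constructor
    · rintro ⟨hx, hlt⟩
      have := P.le_max' x hx
      omega
    · rintro rfl
      exact ⟨hMP, by omega⟩
  unfold cnt
  rw [this]
  simp

lemma toP_nonempty (n : ℕ) {S : Finset ℕ} (hS : S ⊆ Finset.range n)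
    (hne : S.Nonempty) : (toP n S).Nonempty := by
  set M := S.max' hne with hM
  have hMS : M ∈ S := S.max'_mem hne
  have hMn : M < n := Finset.mem_range.mp (hS hMS)
  refine ⟨M + 1, ?_⟩
  unfold toP
  simp only [Finset.mem_filter, Finset.mem_Icc, Nat.add_sub_cancel]
  refine ⟨⟨by omega, by omega⟩, ?_⟩
  intro h
  have : M + 1 ∈ S := h.mp hMS
  have := S.le_max' _ this
  omega

/-- `P ↦ λ(P)` is a bijection from the nonempty subsets of `{1, …, n}`
onto the positive weights of the fundamental representations of `a_n`, a weight
`∑_{b ∈ S} er_b` (with `S` an `i`-element subset of `{1, …, n+1}`, `1 ≤ i ≤ n`)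
being positive iff `n+1 ∉ S` (in 0-based indexing: `S ⊆ {0, …, n-1}`). -/
theorem lamAlt_bijection (n : ℕ) (hn : 1 ≤ n) :
    Set.BijOn (lamAlt n)
      {P : Finset ℕ | P ⊆ Finset.Icc 1 n ∧ P.Nonempty}
      {w : Fin (n + 1) → ℝ | ∃ S : Finset ℕ, S ⊆ Finset.range n ∧ S.Nonempty ∧
        w = ∑ b ∈ S, er n b} := by
  refine ⟨?_, ?_, ?_⟩
  · rintro P ⟨hPsub, hPne⟩
    exact ⟨toS n P, toS_subset n P, toS_nonempty n hPsub hPne,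
      lamAlt_eq n P hPsub⟩
  · rintro P ⟨hPsub, hPne⟩ P' ⟨hPsub', hPne'⟩ h
    rw [lamAlt_eq n P hPsub, lamAlt_eq n P' hPsub'] at h
    have := sum_er_inj n (toS_subset n P) (toS_subset n P') h
    calc P = toP n (toS n P) := (toP_toS n P hPsub).symm
    _ = toP n (toS n P') := by rw [this]
    _ = P' := toP_toS n P' hPsub'
  · rintro w ⟨S, hSsub, hSne, rfl⟩
    refine ⟨toP n S, ⟨toP_subset n S, toP_nonempty n hSsub hSne⟩, ?_⟩
    rw [lamAlt_eq n (toP n S) (toP_subset n S), toS_toP n S hSsub]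
end

section
/- For the a_n^{(1)} reflection amplitude K_a(θ) = Π_{c=1}^{a} (c−1)(c−n−1)(−c+B/2)(−c−n−B/2) with blocks of Coxeter number h = n+1, the charge-conjugation symmetry K_a(θ) = K_{n+1−a}(θ) holds for 1 ≤ a ≤ n, as an identity of meromorphic functions of θ. -/
open Complex Finset

/-- The building block `(x)(θ) = sin(θ/(2h') + πx/(2h)) / ...` with Coxeter number `h`. -/
noncomputable def blk (h : ℕ) (x : ℝ) (θ : ℂ) : ℂ :=
  Complex.sin (θ / (2 * Complex.I) + ((Real.pi * x / (2 * h) : ℝ) : ℂ)) /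
    Complex.sin (θ / (2 * Complex.I) - ((Real.pi * x / (2 * h) : ℝ) : ℂ))

/-- The `a_n^{(1)}` reflection amplitude
`K_a(θ) = ∏_{c=1}^{a} (c-1)(c-n-1)(-c+B/2)(-c-n-B/2)` with `h = n+1`. -/
noncomputable def Kref (n : ℕ) (B : ℝ) (a : ℕ) (θ : ℂ) : ℂ :=
  ∏ c ∈ Finset.Icc 1 a,
    (blk (n + 1) ((c : ℝ) - 1) θ * blk (n + 1) ((c : ℝ) - n - 1) θ *
      blk (n + 1) (-(c : ℝ) + B / 2) θ * blk (n + 1) (-(c : ℝ) - n - B / 2) θ)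

lemma sin_sub_ne (θ : ℂ) (hθ : ∀ x : ℝ, Complex.sin (θ / (2 * Complex.I) + (x : ℂ)) ≠ 0)
    (x : ℝ) : Complex.sin (θ / (2 * Complex.I) - (x : ℂ)) ≠ 0 := by
  have := hθ (-x)
  push_cast at this
  simpa [sub_eq_add_neg] using this

lemma blk_pair (h : ℕ) (θ : ℂ)
    (hθ : ∀ x : ℝ, Complex.sin (θ / (2 * Complex.I) + (x : ℂ)) ≠ 0)
    (x y : ℝ) (hxy : x + y = 0) : blk h x θ * blk h y θ = 1 := by
  have hy : y = -x := by linarith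
  subst hy
  unfold blk
  rw [show (Real.pi * (-x) / (2 * (h:ℝ)) : ℝ) = -(Real.pi * x / (2 * (h:ℝ))) from by ring,
    Complex.ofReal_neg, sub_neg_eq_add, ← sub_eq_add_neg]
  have hnum : Complex.sin (θ / (2 * Complex.I) + ((Real.pi * x / (2 * (h:ℝ)) : ℝ) : ℂ)) ≠ 0 :=
    hθ _
  have hden : Complex.sin (θ / (2 * Complex.I) - ((Real.pi * x / (2 * (h:ℝ)) : ℝ) : ℂ)) ≠ 0 :=
    sin_sub_ne θ hθ _
  rw [div_mul_div_comm, mul_comm (Complex.sin (θ / (2 * Complex.I) +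
    ((Real.pi * x / (2 * (h:ℝ)) : ℝ) : ℂ)))]
  exact div_self (mul_ne_zero hden hnum)

lemma blk_period (h : ℕ) (hh : h ≠ 0) (θ : ℂ) (x : ℝ) :
    blk h (x + 2 * (h:ℝ)) θ = blk h x θ := by
  unfold blk
  have hR : (h:ℝ) ≠ 0 := Nat.cast_ne_zero.mpr hh
  rw [show (Real.pi * (x + 2 * (h:ℝ)) / (2 * (h:ℝ)) : ℝ)
      = Real.pi * x / (2 * (h:ℝ)) + Real.pi from by field_simp,
    Complex.ofReal_add]
  set w : ℂ := ((Real.pi * x / (2 * (h:ℝ)) : ℝ) : ℂ) with hw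
  have hs : ∀ u : ℂ, Complex.sin (u + (Real.pi : ℂ)) = -Complex.sin u := by
    intro u
    rw [Complex.sin_add]
    simp [← Complex.ofReal_sin, ← Complex.ofReal_cos]
  have hs' : ∀ u : ℂ, Complex.sin (u - (Real.pi : ℂ)) = -Complex.sin u := by
    intro u
    rw [sub_eq_add_neg, Complex.sin_add]
    simp [← Complex.ofReal_sin, ← Complex.ofReal_cos]
  rw [show θ / (2 * Complex.I) + (w + (Real.pi : ℂ))
      = (θ / (2 * Complex.I) + w) + (Real.pi : ℂ) from by ring,
    show θ / (2 * Complex.I) - (w + (Real.pi : ℂ))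
      = (θ / (2 * Complex.I) - w) - (Real.pi : ℂ) from by ring,
    hs, hs', neg_div_neg_eq]

lemma blk_pair2h (h : ℕ) (hh : h ≠ 0) (θ : ℂ)
    (hθ : ∀ x : ℝ, Complex.sin (θ / (2 * Complex.I) + (x : ℂ)) ≠ 0)
    (x y : ℝ) (hxy : x + y = -2 * (h:ℝ)) : blk h x θ * blk h y θ = 1 := by
  have hy : blk h y θ = blk h (-x) θ := by
    have := blk_period h hh θ y
    rw [show y + 2 * (h:ℝ) = -x from by linarith] at this
    exact this.symm
  rw [hy]
  exact blk_pair h θ hθ x (-x) (by ring)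

/-- the product of the four blocks appearing in `Kref`. -/
noncomputable def Fblk (n : ℕ) (B : ℝ) (θ : ℂ) (x : ℝ) : ℂ :=
  blk (n + 1) (x - 1) θ * blk (n + 1) (x - n - 1) θ *
    blk (n + 1) (-x + B / 2) θ * blk (n + 1) (-x - n - B / 2) θ

lemma Fblk_pair (n : ℕ) (B : ℝ) (θ : ℂ)
    (hθ : ∀ x : ℝ, Complex.sin (θ / (2 * Complex.I) + (x : ℂ)) ≠ 0)
    (x y : ℝ) (hxy : x + y = (n:ℝ) + 2) :
    Fblk n B θ x * Fblk n B θ y = 1 := by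
  have h1 := blk_pair (n + 1) θ hθ (x - 1) (y - (n:ℝ) - 1) (by linarith)
  have h2 := blk_pair (n + 1) θ hθ (x - (n:ℝ) - 1) (y - 1) (by linarith)
  have h3 := blk_pair2h (n + 1) (by omega) θ hθ (-x + B / 2) (-y - (n:ℝ) - B / 2)
    (by push_cast; linarith)
  have h4 := blk_pair2h (n + 1) (by omega) θ hθ (-x - (n:ℝ) - B / 2) (-y + B / 2)
    (by push_cast; linarith)
  unfold Fblk
  calc blk (n + 1) (x - 1) θ * blk (n + 1) (x - ↑n - 1) θ * blk (n + 1) (-x + B / 2) θ *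
        blk (n + 1) (-x - ↑n - B / 2) θ *
      (blk (n + 1) (y - 1) θ * blk (n + 1) (y - ↑n - 1) θ * blk (n + 1) (-y + B / 2) θ *
        blk (n + 1) (-y - ↑n - B / 2) θ)
      = (blk (n + 1) (x - 1) θ * blk (n + 1) (y - ↑n - 1) θ) *
        ((blk (n + 1) (x - ↑n - 1) θ * blk (n + 1) (y - 1) θ) *
        ((blk (n + 1) (-x + B / 2) θ * blk (n + 1) (-y - ↑n - B / 2) θ) *
        (blk (n + 1) (-x - ↑n - B / 2) θ * blk (n + 1) (-y + B / 2) θ))) := by ring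
    _ = 1 := by rw [h1, h2, h3, h4]; ring

lemma Fblk_fixed (n : ℕ) (B : ℝ) (θ : ℂ)
    (hθ : ∀ x : ℝ, Complex.sin (θ / (2 * Complex.I) + (x : ℂ)) ≠ 0)
    (x : ℝ) (hx : 2 * x = (n:ℝ) + 2) : Fblk n B θ x = 1 := by
  have h1 := blk_pair (n + 1) θ hθ (x - 1) (x - (n:ℝ) - 1) (by linarith)
  have h2 := blk_pair2h (n + 1) (by omega) θ hθ (-x + B / 2) (-x - (n:ℝ) - B / 2)
    (by push_cast; linarith)
  unfold Fblk
  calc blk (n + 1) (x - 1) θ * blk (n + 1) (x - ↑n - 1) θ * blk (n + 1) (-x + B / 2) θ *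
        blk (n + 1) (-x - ↑n - B / 2) θ
      = (blk (n + 1) (x - 1) θ * blk (n + 1) (x - ↑n - 1) θ) *
        (blk (n + 1) (-x + B / 2) θ * blk (n + 1) (-x - ↑n - B / 2) θ) := by ring
    _ = 1 := by rw [h1, h2, one_mul]

lemma Kref_eq_prod_Fblk (n : ℕ) (B : ℝ) (θ : ℂ) (a : ℕ) :
    Kref n B a θ = ∏ c ∈ Finset.Icc 1 a, Fblk n B θ (c : ℝ) := rfl

lemma Kref_key (n : ℕ) (B : ℝ) (θ : ℂ)
    (hθ : ∀ x : ℝ, Complex.sin (θ / (2 * Complex.I) + (x : ℂ)) ≠ 0)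
    (a : ℕ) (ha1 : 1 ≤ a) (han : a ≤ n) (h2a : 2 * a ≤ n + 1) :
    Kref n B a θ = Kref n B (n + 1 - a) θ := by
  rw [Kref_eq_prod_Fblk, Kref_eq_prod_Fblk]
  have hsplit : (∏ c ∈ Finset.Ico 1 (a + 1), Fblk n B θ (c : ℝ)) *
      (∏ c ∈ Finset.Ico (a + 1) (n + 1 - a + 1), Fblk n B θ (c : ℝ)) =
      ∏ c ∈ Finset.Ico 1 (n + 1 - a + 1), Fblk n B θ (c : ℝ) :=
    Finset.prod_Ico_consecutive _ (by omega) (by omega)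
  rw [Finset.Ico_add_one_right_eq_Icc, Finset.Ico_add_one_right_eq_Icc, Finset.Ico_add_one_right_eq_Icc] at hsplit
  have hwin : (∏ c ∈ Finset.Icc (a + 1) (n + 1 - a), Fblk n B θ (c : ℝ)) = 1 := by
    apply Finset.prod_involution (g := fun c _ => n + 2 - c)
    · intro c hc
      simp only [Finset.mem_Icc] at hc
      have hle : c ≤ n + 2 := by omega
      have hcast : (((n + 2 - c : ℕ) : ℝ)) = (n : ℝ) + 2 - (c : ℝ) := by
        push_cast [Nat.cast_sub hle]
        ring
      rw [hcast]
      exact Fblk_pair n B θ hθ _ _ (by ring)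
    · intro c hc hne heq
      simp only [Finset.mem_Icc] at hc
      apply hne
      apply Fblk_fixed n B θ hθ
      have h2c : 2 * c = n + 2 := by omega
      exact_mod_cast congrArg (Nat.cast : ℕ → ℝ) h2c
    · intro c hc
      simp only [Finset.mem_Icc] at hc ⊢
      omega
    · intro c hc
      simp only [Finset.mem_Icc] at hc
      omega
  rw [← hsplit, hwin, mul_one]

/-- the charge-conjugation symmetry `K_a(θ) = K_{n+1-a}(θ)` for
`1 ≤ a ≤ n`, as an identity of meromorphic functions (stated at every `θ` where no
block denominator vanishes). -/
theorem Kref_charge_conjugation (n : ℕ) (B : ℝ) (a : ℕ) (ha1 : 1 ≤ a) (han : a ≤ n)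
    (θ : ℂ)
    (hθ : ∀ x : ℝ, Complex.sin (θ / (2 * Complex.I) + (x : ℂ)) ≠ 0) :
    Kref n B a θ = Kref n B (n + 1 - a) θ := by
  rcases le_or_gt (2 * a) (n + 1) with h | h
  · exact Kref_key n B θ hθ a ha1 han h
  · have hb := Kref_key n B θ hθ (n + 1 - a) (by omega) (by omega) (by omega)
    rw [show n + 1 - (n + 1 - a) = a from by omega] at hb
    exact hb.symm
end

section
/- The boundary bootstrap identity holds for the a_n^{(1)} reflection amplitudes: K_{a+b}(θ) = K_b(θ − iπa/(n+1)) · S_{a,b}(2θ + iπ(b−a)/(n+1)) · K_a(θ + iπb/(n+1)), where K_a(θ) = Π_{c=1}^{a}(c−1)(c−n−1)(−c+B/2)(−c−n−B/2), and S_{a,b}(θ) = Π_{p = b−a+1, step 2}^{a+b−1} (p+1)(p−1)(−p−1+B)(−p+1−B) for a ≤ b with a + b ≤ n, as an identity of meromorphic functions of θ. -/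
open Complex Finset

/-- The `a_n^{(1)}` two-particle S-matrix `S_{a,b}(θ)` for `a ≤ b`:
`∏_{p = b-a+1, step 2}^{a+b-1} (p+1)(p-1)(-p-1+B)(-p+1-B)`, the product being over
`p = b-a+1+2m`, `m = 0, …, a-1`. -/
noncomputable def Sab (n : ℕ) (B : ℝ) (a b : ℕ) (θ : ℂ) : ℂ :=
  ∏ m ∈ Finset.range a,
    (blk (n + 1) (((b : ℝ) - a + 1 + 2 * m) + 1) θ *
      blk (n + 1) (((b : ℝ) - a + 1 + 2 * m) - 1) θ *
      blk (n + 1) (-((b : ℝ) - a + 1 + 2 * m) - 1 + B) θ *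
      blk (n + 1) (-((b : ℝ) - a + 1 + 2 * m) + 1 - B) θ)

namespace BBaux

noncomputable def P (g : ℝ → ℂ) (x : ℝ) (k : ℕ) : ℂ := ∏ j ∈ Finset.range k, g (x + j)

lemma P_congr (g : ℝ → ℂ) {x y : ℝ} (k : ℕ) (e : x = y) : P g x k = P g y k := by rw [e]

lemma P_add (g : ℝ → ℂ) (x : ℝ) (k m : ℕ) :
    P g x (k + m) = P g x k * P g (x + k) m := by
  unfold P
  rw [Finset.prod_range_add]
  congr 1
  refine Finset.prod_congr rfl fun j _ => ?_
  congr 1; push_cast; ring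

lemma P_ne (g : ℝ → ℂ) (hg : ∀ x, g x ≠ 0) (x : ℝ) (k : ℕ) : P g x k ≠ 0 :=
  Finset.prod_ne_zero_iff.mpr fun _ _ => hg _

lemma P_down (g : ℝ → ℂ) (c : ℝ) (k : ℕ) :
    (∏ j ∈ Finset.range k, g (c - j)) = P g (c - k + 1) k := by
  unfold P
  rw [← Finset.prod_range_reflect]
  refine Finset.prod_congr rfl fun j hj => ?_
  have hj' : j < k := Finset.mem_range.mp hj
  congr 1
  rw [Nat.cast_sub (by omega), Nat.cast_sub (by omega)]
  push_cast; ring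

lemma P_shift (g : ℝ → ℂ) {h : ℝ} (hs : ∀ x : ℝ, g (x + 2*h) = - g x) (x : ℝ) (k : ℕ) :
    P g (x + 2*h) k = (-1)^k * P g x k := by
  unfold P
  calc (∏ j ∈ Finset.range k, g (x + 2*h + j))
      = ∏ j ∈ Finset.range k, (-1) * g (x + j) := by
        refine Finset.prod_congr rfl fun j _ => ?_
        rw [show x + 2*h + (j:ℝ) = (x + j) + 2*h by ring, hs, neg_one_mul]
    _ = (-1)^k * ∏ j ∈ Finset.range k, g (x + j) := by
        rw [Finset.prod_mul_distrib, Finset.prod_const, Finset.card_range]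

lemma P_shift' (g : ℝ → ℂ) {h : ℝ} (hs : ∀ x : ℝ, g (x + 2*h) = - g x) (x : ℝ) (k : ℕ) :
    P g x k = (-1)^k * P g (x + 2*h) k := by
  rw [P_shift g hs, ← mul_assoc, ← pow_add, ← two_mul, pow_mul]
  norm_num

lemma prod_asc (g : ℝ → ℂ) (k : ℕ) (f : ℕ → ℝ) (q : ℝ)
    (hf : ∀ c, 1 ≤ c → c ≤ k → f c = q + ((c:ℝ) - 1)) :
    ∏ c ∈ Finset.Icc 1 k, g (f c) = P g q k := by
  rw [← Finset.Ico_add_one_right_eq_Icc, Finset.prod_Ico_eq_prod_range]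
  unfold P
  refine Finset.prod_congr (by simp) fun j hj => ?_
  have hj' : j < k + 1 - 1 := Finset.mem_range.mp hj
  rw [hf (1+j) (by omega) (by omega)]
  congr 1; push_cast; ring

lemma prod_desc (g : ℝ → ℂ) (k : ℕ) (f : ℕ → ℝ) (q : ℝ)
    (hf : ∀ c, 1 ≤ c → c ≤ k → f c = q + ((k:ℝ) - c)) :
    ∏ c ∈ Finset.Icc 1 k, g (f c) = P g q k := by
  rw [← Finset.Ico_add_one_right_eq_Icc, Finset.prod_Ico_eq_prod_range]
  have e1 : ∏ j ∈ Finset.range (k+1-1), g (f (1+j)) = ∏ j ∈ Finset.range k, g ((q + k - 1) - j) := by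
    refine Finset.prod_congr (by simp) fun j hj => ?_
    have hj' : j < k := Finset.mem_range.mp hj
    rw [hf (1+j) (by omega) (by omega)]
    congr 1; push_cast; ring
  rw [e1, P_down]
  exact P_congr g k (by ring)

lemma prod_asc' (g : ℝ → ℂ) (k : ℕ) (f : ℕ → ℝ) (q : ℝ)
    (hf : ∀ m, m < k → f m = q + (m:ℝ)) :
    ∏ m ∈ Finset.range k, g (f m) = P g q k := by
  unfold P
  exact Finset.prod_congr rfl fun m hm => by rw [hf m (Finset.mem_range.mp hm)]

lemma prod_desc' (g : ℝ → ℂ) (k : ℕ) (f : ℕ → ℝ) (q : ℝ)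
    (hf : ∀ m, m < k → f m = q + ((k:ℝ) - 1) - m) :
    ∏ m ∈ Finset.range k, g (f m) = P g q k := by
  have e1 : ∏ m ∈ Finset.range k, g (f m) = ∏ m ∈ Finset.range k, g ((q + k - 1) - m) := by
    refine Finset.prod_congr rfl fun m hm => ?_
    rw [hf m (Finset.mem_range.mp hm)]
    congr 1; ring
  rw [e1, P_down]
  exact P_congr g k (by ring)

lemma Kred (n k : ℕ) (B : ℝ) (θ' : ℂ) (g : ℝ → ℂ) (s : ℝ)
    (hblk : ∀ x : ℝ, blk (n+1) x θ' = g (x + s) / g (-x + s))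
    (q1 q2 q3 q4 q5 q6 q7 q8 : ℝ)
    (e1 : q1 = s) (e2 : q2 = s + 1 - ((n:ℝ)+1)) (e3 : q3 = s + B/2 - k)
    (e4 : q4 = s + 1 - k - ((n:ℝ)+1) - B/2) (e5 : q5 = s + 1 - k)
    (e6 : q6 = s + ((n:ℝ)+1) - k) (e7 : q7 = s + 1 - B/2) (e8 : q8 = s + ((n:ℝ)+1) + B/2) :
    Kref n B k θ' =
      (P g q1 k * P g q2 k * P g q3 k * P g q4 k) /
      (P g q5 k * P g q6 k * P g q7 k * P g q8 k) := by
  unfold Kref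
  have hfac : ∀ c ∈ Finset.Icc 1 k,
      blk (n+1) ((c:ℝ)-1) θ' * blk (n+1) ((c:ℝ)-n-1) θ' * blk (n+1) (-(c:ℝ)+B/2) θ' *
        blk (n+1) (-(c:ℝ)-n-B/2) θ'
      = (g ((c:ℝ)-1+s) * g ((c:ℝ)-n-1+s) * g (-(c:ℝ)+B/2+s) * g (-(c:ℝ)-n-B/2+s)) /
        (g (-((c:ℝ)-1)+s) * g (-((c:ℝ)-n-1)+s) * g (-(-(c:ℝ)+B/2)+s) * g (-(-(c:ℝ)-n-B/2)+s)) := by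
    intro c _
    rw [hblk, hblk, hblk, hblk, div_mul_div_comm, div_mul_div_comm, div_mul_div_comm]
  rw [Finset.prod_congr rfl hfac, Finset.prod_div_distrib]
  simp only [Finset.prod_mul_distrib]
  rw [prod_asc g k (fun c => (c:ℝ)-1+s) q1 (fun c h1 h2 => by subst e1; push_cast; ring),
      prod_asc g k (fun c => (c:ℝ)-(n:ℝ)-1+s) q2 (fun c h1 h2 => by subst e2; push_cast; ring),
      prod_desc g k (fun c => -(c:ℝ)+B/2+s) q3 (fun c h1 h2 => by subst e3; push_cast; ring),
      prod_desc g k (fun c => -(c:ℝ)-(n:ℝ)-B/2+s) q4 (fun c h1 h2 => by subst e4; push_cast; ring),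
      prod_desc g k (fun c => -((c:ℝ)-1)+s) q5 (fun c h1 h2 => by subst e5; push_cast; ring),
      prod_desc g k (fun c => -((c:ℝ)-(n:ℝ)-1)+s) q6 (fun c h1 h2 => by subst e6; push_cast; ring),
      prod_asc g k (fun c => -(-(c:ℝ)+B/2)+s) q7 (fun c h1 h2 => by subst e7; push_cast; ring),
      prod_asc g k (fun c => -(-(c:ℝ)-(n:ℝ)-B/2)+s) q8 (fun c h1 h2 => by subst e8; push_cast; ring)]

lemma key (g : ℝ → ℂ) (hg : ∀ x, g x ≠ 0) (h β : ℝ)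
    (hs : ∀ x : ℝ, g (x + 2*h) = - g x) (a d : ℕ) :
    (P g (0) (a+(a+d)) * P g (1-h) (a+(a+d)) * P g (β-2*(a:ℝ)-(d:ℝ)) (a+(a+d)) * P g (1-2*(a:ℝ)-(d:ℝ)-h-β) (a+(a+d))) / (P g (1-2*(a:ℝ)-(d:ℝ)) (a+(a+d)) * P g (h-2*(a:ℝ)-(d:ℝ)) (a+(a+d)) * P g (1-β) (a+(a+d)) * P g (h+β) (a+(a+d)))
      = ((P g (-(a:ℝ)) (a+d) * P g (1-h-(a:ℝ)) (a+d) * P g (β-2*(a:ℝ)-(d:ℝ)) (a+d) * P g (1-2*(a:ℝ)-(d:ℝ)-h-β) (a+d)) / (P g (1-2*(a:ℝ)-(d:ℝ)) (a+d) * P g (h-2*(a:ℝ)-(d:ℝ)) (a+d) * P g (1-(a:ℝ)-β) (a+d) * P g (h+β-(a:ℝ)) (a+d))) * ((P g (1+(d:ℝ)) (a) * P g (1+(d:ℝ)+h) (a) * P g ((d:ℝ)) (a) * P g (h+(d:ℝ)) (a) * P g (β-(a:ℝ)) (a) * P g (h+β-(a:ℝ)) (a) * P g (1-(a:ℝ)-β)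 (a) * P g (1-(a:ℝ)-β+h) (a)) / (P g (-(a:ℝ)) (a) * P g (h-(a:ℝ)) (a) * P g (1-(a:ℝ)) (a) * P g (1-(a:ℝ)+h) (a) * P g (1+(d:ℝ)-β) (a) * P g (1+(d:ℝ)-β+h) (a) * P g (β+(d:ℝ)) (a) * P g (h+β+(d:ℝ)) (a))) * ((P g ((a:ℝ)+(d:ℝ)) (a) * P g (1-h+(a:ℝ)+(d:ℝ)) (a) * P g (β+(d:ℝ)) (a) * P g (1+(d:ℝ)-h-β) (a)) / (P g (1+(d:ℝ)) (a) * P g (h+(d:ℝ)) (a) * P g (1+(a:ℝ)+(d:ℝ)-β) (a) * P g (h+β+(a:ℝ)+(d:ℝ)) (a))) := by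
  have hP := P_ne g hg
  have hsq : ∀ k : ℕ, ((-1:ℂ))^k * (-1)^k = 1 := fun k => by
    rw [← pow_add, ← two_mul, pow_mul]; norm_num
  have hc3L : P g (h+β-(a:ℝ)) (a+d+(a+a)) = P g (h+β-(a:ℝ)) (a+d) * (P g (h+β+(d:ℝ)) (a) * P g (h+β+(a:ℝ)+(d:ℝ)) (a)) := by
    rw [P_add g (h+β-(a:ℝ)) (a+d) (a+a), show h+β-(a:ℝ)+((a+d : ℕ) : ℝ) = h+β+(d:ℝ) from by push_cast; ring, P_add g (h+β+(d:ℝ)) (a) (a), show h+β+(d:ℝ)+(a:ℝ) = h+β+(a:ℝ)+(d:ℝ) from by push_cast; ring]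
  have hc4L : P g (1-(a:ℝ)-β) (a+(a+(a+d))) = P g (1-(a:ℝ)-β) (a+d) * (P g (1+(d:ℝ)-β) (a) * P g (1+(a:ℝ)+(d:ℝ)-β) (a)) := by
    rw [show (a+(a+(a+d))) = ((a+d)+(a+a)) from by omega]; rw [P_add g (1-(a:ℝ)-β) (a+d) (a+a), show 1-(a:ℝ)-β+((a+d : ℕ) : ℝ) = 1+(d:ℝ)-β from by push_cast; ring, P_add g (1+(d:ℝ)-β) (a) (a), show 1+(d:ℝ)-β+(a:ℝ) = 1+(a:ℝ)+(d:ℝ)-β from by push_cast; ring]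
  have hc7L : P g (1-2*(a:ℝ)-(d:ℝ)) (a+(a+d)) = P g (1-2*(a:ℝ)-(d:ℝ)) (a+d) * P g (1-(a:ℝ)) (a) := by
    rw [show (a+(a+d)) = ((a+d)+a) from by omega]; rw [P_add g (1-2*(a:ℝ)-(d:ℝ)) (a+d) (a), show 1-2*(a:ℝ)-(d:ℝ)+((a+d : ℕ) : ℝ) = 1-(a:ℝ) from by push_cast; ring]
  have hc8L : P g (-(a:ℝ)) (a+(a+(a+d))) = P g (-(a:ℝ)) (a) * P g (0) (a+(a+d)) := by
    rw [P_add g (-(a:ℝ)) (a) (a+(a+d)), show -(a:ℝ)+(a:ℝ) = 0 from by push_cast; ring]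
  have hc10L : P g (h-2*(a:ℝ)-(d:ℝ)) (a+(a+d)) = P g (h-2*(a:ℝ)-(d:ℝ)) (a+d) * P g (h-(a:ℝ)) (a) := by
    rw [show (a+(a+d)) = ((a+d)+a) from by omega]; rw [P_add g (h-2*(a:ℝ)-(d:ℝ)) (a+d) (a), show h-2*(a:ℝ)-(d:ℝ)+((a+d : ℕ) : ℝ) = h-(a:ℝ) from by push_cast; ring]
  have hc11L : P g (1-(a:ℝ)+h) (a+(a+(a+d))) = P g (1-(a:ℝ)+h) (a) * P g (1+h) (a+(a+d)) := by
    rw [P_add g (1-(a:ℝ)+h) (a) (a+(a+d)), show 1-(a:ℝ)+h+(a:ℝ) = 1+h from by push_cast; ring]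
  have hc1R : P g (β-2*(a:ℝ)-(d:ℝ)) (a+(a+d)) = P g (β-2*(a:ℝ)-(d:ℝ)) (a+d) * P g (β-(a:ℝ)) (a) := by
    rw [show (a+(a+d)) = ((a+d)+a) from by omega]; rw [P_add g (β-2*(a:ℝ)-(d:ℝ)) (a+d) (a), show β-2*(a:ℝ)-(d:ℝ)+((a+d : ℕ) : ℝ) = β-(a:ℝ) from by push_cast; ring]
  have hc3R : P g (h+β-(a:ℝ)) (a+d+(a+a)) = P g (h+β-(a:ℝ)) (a) * P g (h+β) (a+(a+d)) := by
    rw [show (a+d+(a+a)) = (a+(a+(a+d))) from by omega]; rw [P_add g (h+β-(a:ℝ)) (a) (a+(a+d)), show h+β-(a:ℝ)+(a:ℝ) = h+β from by push_cast; ring]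
  have hc4R : P g (1-(a:ℝ)-β) (a+(a+(a+d))) = P g (1-(a:ℝ)-β) (a) * P g (1-β) (a+(a+d)) := by
    rw [P_add g (1-(a:ℝ)-β) (a) (a+(a+d)), show 1-(a:ℝ)-β+(a:ℝ) = 1-β from by push_cast; ring]
  have hc5R : P g (1-2*(a:ℝ)-(d:ℝ)+h-β) (a+(a+d)) = P g (1-2*(a:ℝ)-(d:ℝ)+h-β) (a+d) * P g (1-(a:ℝ)-β+h) (a) := by
    rw [show (a+(a+d)) = ((a+d)+a) from by omega]; rw [P_add g (1-2*(a:ℝ)-(d:ℝ)+h-β) (a+d) (a), show 1-2*(a:ℝ)-(d:ℝ)+h-β+((a+d : ℕ) : ℝ) = 1-(a:ℝ)-β+h from by push_cast; ring]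
  have hc8R : P g (-(a:ℝ)) (a+(a+(a+d))) = P g (-(a:ℝ)) (a+d) * (P g ((d:ℝ)) (a) * P g ((a:ℝ)+(d:ℝ)) (a)) := by
    rw [show (a+(a+(a+d))) = ((a+d)+(a+a)) from by omega]; rw [P_add g (-(a:ℝ)) (a+d) (a+a), show -(a:ℝ)+((a+d : ℕ) : ℝ) = (d:ℝ) from by push_cast; ring, P_add g ((d:ℝ)) (a) (a), show (d:ℝ)+(a:ℝ) = (a:ℝ)+(d:ℝ) from by push_cast; ring]
  have hc11R : P g (1-(a:ℝ)+h) (a+(a+(a+d))) = P g (1-(a:ℝ)+h) (a+d) * (P g (1+(d:ℝ)+h) (a) * P g (1+h+(a:ℝ)+(d:ℝ)) (a)) := by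
    rw [show (a+(a+(a+d))) = ((a+d)+(a+a)) from by omega]; rw [P_add g (1-(a:ℝ)+h) (a+d) (a+a), show 1-(a:ℝ)+h+((a+d : ℕ) : ℝ) = 1+(d:ℝ)+h from by push_cast; ring, P_add g (1+(d:ℝ)+h) (a) (a), show 1+(d:ℝ)+h+(a:ℝ) = 1+h+(a:ℝ)+(d:ℝ) from by push_cast; ring]
  have hL : (P g (0) (a+(a+d)) * P g (1-h) (a+(a+d)) * P g (β-2*(a:ℝ)-(d:ℝ)) (a+(a+d)) * P g (1-2*(a:ℝ)-(d:ℝ)-h-β) (a+(a+d))) * (P g (1-2*(a:ℝ)-(d:ℝ)) (a+d) * P g (h-2*(a:ℝ)-(d:ℝ)) (a+d) * P g (1-(a:ℝ)-β) (a+d) * P g (h+β-(a:ℝ)) (a+d) * (P g (-(a:ℝ)) (a) * P g (h-(a:ℝ)) (a) * P g (1-(a:ℝ)) (a) * P g (1-(a:ℝ)+h) (a) * P g (1+(d:ℝ)-β) (a) * P g (1+(d:ℝ)-β+h) (a) * P g (β+(d:ℝ)) (a) * P g (h+β+(d:ℝ)) (a)) * (P g (1+(d:ℝ)) (a) * P g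 (h+(d:ℝ)) (a) * P g (1+(a:ℝ)+(d:ℝ)-β) (a) * P g (h+β+(a:ℝ)+(d:ℝ)) (a))) = P g (β-2*(a:ℝ)-(d:ℝ)) (a+(a+d)) * P g (β+(d:ℝ)) (a) * P g (h+β-(a:ℝ)) (a+d+(a+a)) * P g (1-(a:ℝ)-β) (a+(a+(a+d))) * P g (1-2*(a:ℝ)-(d:ℝ)+h-β) (a+(a+d)) * P g (1+(d:ℝ)-β+h) (a) * P g (1-2*(a:ℝ)-(d:ℝ)) (a+(a+d)) * P g (-(a:ℝ)) (a+(a+(a+d))) * P g (1+(d:ℝ)) (a) * P g (h-2*(a:ℝ)-(d:ℝ)) (a+(a+d)) * P g (1-(a:ℝ)+h) (a+(a+(a+d))) * P g (h+(d:ℝ)) (a) := by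
    calc (P g (0) (a+(a+d)) * P g (1-h) (a+(a+d)) * P g (β-2*(a:ℝ)-(d:ℝ)) (a+(a+d)) * P g (1-2*(a:ℝ)-(d:ℝ)-h-β) (a+(a+d))) * (P g (1-2*(a:ℝ)-(d:ℝ)) (a+d) * P g (h-2*(a:ℝ)-(d:ℝ)) (a+d) * P g (1-(a:ℝ)-β) (a+d) * P g (h+β-(a:ℝ)) (a+d) * (P g (-(a:ℝ)) (a) * P g (h-(a:ℝ)) (a) * P g (1-(a:ℝ)) (a) * P g (1-(a:ℝ)+h) (a) * P g (1+(d:ℝ)-β) (a) * P g (1+(d:ℝ)-β+h) (a) * P g (β+(d:ℝ)) (a) * P g (h+β+(d:ℝ)) (a)) * (P g (1+(d:ℝ)) (a) * P g (h+(d:ℝ)) (a) * P g (1+(a:ℝ)+(d:ℝ)-β) (a) * P g (h+β+(a:ℝ)+(d:ℝ)) (a)))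
        = (((-1:ℂ))^(a+(a+d)) * ((-1:ℂ))^(a+(a+d))) * (P g (0) (a+(a+d)) * P g (1+h) (a+(a+d)) * P g (β-2*(a:ℝ)-(d:ℝ)) (a+(a+d)) * P g (1-2*(a:ℝ)-(d:ℝ)+h-β) (a+(a+d)) * P g (1-2*(a:ℝ)-(d:ℝ)) (a+d) * P g (h-2*(a:ℝ)-(d:ℝ)) (a+d) * P g (1-(a:ℝ)-β) (a+d) * P g (h+β-(a:ℝ)) (a+d) * P g (-(a:ℝ)) (a) * P g (h-(a:ℝ)) (a) * P g (1-(a:ℝ)) (a) * P g (1-(a:ℝ)+h) (a) * P g (1+(d:ℝ)-β) (a) * P g (1+(d:ℝ)-β+h) (a) * P g (β+(d:ℝ)) (a) * P g (h+β+(d:ℝ)) (a) * P g (1+(d:ℝ)) (a) * P g (h+(d:ℝ)) (a) * P g (1+(a:ℝ)+(d:ℝ)-β) (a) * P g (h+β+(a:ℝ)+(d:ℝ)) (a)) := by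
          rw [P_shift' g hs (1-h) (a+(a+d)), show (1:ℝ)-h+2*h = 1+h from by ring,
              P_shift' g hs (1-2*(a:ℝ)-(d:ℝ)-h-β) (a+(a+d)),
              show 1-2*(a:ℝ)-(d:ℝ)-h-β+2*h = 1-2*(a:ℝ)-(d:ℝ)+h-β from by ring]
          ring
      _ = (P g (0) (a+(a+d)) * P g (1+h) (a+(a+d)) * P g (β-2*(a:ℝ)-(d:ℝ)) (a+(a+d)) * P g (1-2*(a:ℝ)-(d:ℝ)+h-β) (a+(a+d)) * P g (1-2*(a:ℝ)-(d:ℝ)) (a+d) * P g (h-2*(a:ℝ)-(d:ℝ)) (a+d) * P g (1-(a:ℝ)-β) (a+d) * P g (h+β-(a:ℝ)) (a+d) * P g (-(a:ℝ)) (a) * P g (h-(a:ℝ)) (a) * P g (1-(a:ℝ)) (a) * P g (1-(a:ℝ)+h) (a) * P g (1+(d:ℝ)-β) (a) * P g (1+(d:ℝ)-β+h) (a) * P g (β+(d:ℝ)) (a) * P g (h+β+(d:ℝ)) (a) * P g (1+(d:ℝ)) (a) * P g (h+(d:ℝ)) (a) * P g (1+(a:ℝ)+(d:ℝ)-β) (a)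 * P g (h+β+(a:ℝ)+(d:ℝ)) (a)) := by rw [hsq, one_mul]
      _ = P g (β-2*(a:ℝ)-(d:ℝ)) (a+(a+d)) * P g (β+(d:ℝ)) (a) * P g (h+β-(a:ℝ)) (a+d+(a+a)) * P g (1-(a:ℝ)-β) (a+(a+(a+d))) * P g (1-2*(a:ℝ)-(d:ℝ)+h-β) (a+(a+d)) * P g (1+(d:ℝ)-β+h) (a) * P g (1-2*(a:ℝ)-(d:ℝ)) (a+(a+d)) * P g (-(a:ℝ)) (a+(a+(a+d))) * P g (1+(d:ℝ)) (a) * P g (h-2*(a:ℝ)-(d:ℝ)) (a+(a+d)) * P g (1-(a:ℝ)+h) (a+(a+(a+d))) * P g (h+(d:ℝ)) (a) := by rw [hc3L, hc4L, hc7L, hc8L, hc10L, hc11L]; ring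
  have hR : (P g (-(a:ℝ)) (a+d) * P g (1-h-(a:ℝ)) (a+d) * P g (β-2*(a:ℝ)-(d:ℝ)) (a+d) * P g (1-2*(a:ℝ)-(d:ℝ)-h-β) (a+d) * (P g (1+(d:ℝ)) (a) * P g (1+(d:ℝ)+h) (a) * P g ((d:ℝ)) (a) * P g (h+(d:ℝ)) (a) * P g (β-(a:ℝ)) (a) * P g (h+β-(a:ℝ)) (a) * P g (1-(a:ℝ)-β) (a) * P g (1-(a:ℝ)-β+h) (a)) * P g ((a:ℝ)+(d:ℝ)) (a) * P g (1-h+(a:ℝ)+(d:ℝ)) (a) * P g (β+(d:ℝ)) (a) * P g (1+(d:ℝ)-h-β) (a)) * (P g (1-2*(a:ℝ)-(d:ℝ)) (a+(a+d)) * P g (h-2*(a:ℝ)-(d:ℝ)) (a+(a+d)) * P g (1-β) (a+(a+d)) * P g (h+β) (a+(a+d))) = P g (β-2*(a:ℝ)-(d:ℝ)) (a+(a+d)) * P g (β+(d:ℝ)) (a) * P g (h+β-(a:ℝ)) (a+d+(a+a)) * P g (1-(a:ℝ)-β) (a+(a+(a+d))) * P g (1-2*(a:ℝ)-(d:ℝ)+h-β)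 (a+(a+d)) * P g (1+(d:ℝ)-β+h) (a) * P g (1-2*(a:ℝ)-(d:ℝ)) (a+(a+d)) * P g (-(a:ℝ)) (a+(a+(a+d))) * P g (1+(d:ℝ)) (a) * P g (h-2*(a:ℝ)-(d:ℝ)) (a+(a+d)) * P g (1-(a:ℝ)+h) (a+(a+(a+d))) * P g (h+(d:ℝ)) (a) := by
    calc (P g (-(a:ℝ)) (a+d) * P g (1-h-(a:ℝ)) (a+d) * P g (β-2*(a:ℝ)-(d:ℝ)) (a+d) * P g (1-2*(a:ℝ)-(d:ℝ)-h-β) (a+d) * (P g (1+(d:ℝ)) (a) * P g (1+(d:ℝ)+h) (a) * P g ((d:ℝ)) (a) * P g (h+(d:ℝ)) (a) * P g (β-(a:ℝ)) (a) * P g (h+β-(a:ℝ)) (a) * P g (1-(a:ℝ)-β) (a) * P g (1-(a:ℝ)-β+h) (a)) * P g ((a:ℝ)+(d:ℝ)) (a) * P g (1-h+(a:ℝ)+(d:ℝ)) (a) * P g (β+(d:ℝ)) (a) * P g (1+(d:ℝ)-h-β) (a)) * (P g (1-2*(a:ℝ)-(d:ℝ)) (a+(a+d)) * P g (h-2*(a:ℝ)-(d:ℝ))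 (a+(a+d)) * P g (1-β) (a+(a+d)) * P g (h+β) (a+(a+d)))
        = ((((-1:ℂ))^(a+d) * ((-1:ℂ))^(a+d)) * (((-1:ℂ))^a * ((-1:ℂ))^a)) * (P g (-(a:ℝ)) (a+d) * P g (1-(a:ℝ)+h) (a+d) * P g (β-2*(a:ℝ)-(d:ℝ)) (a+d) * P g (1-2*(a:ℝ)-(d:ℝ)+h-β) (a+d) * P g (1+(d:ℝ)) (a) * P g (1+(d:ℝ)+h) (a) * P g ((d:ℝ)) (a) * P g (h+(d:ℝ)) (a) * P g (β-(a:ℝ)) (a) * P g (h+β-(a:ℝ)) (a) * P g (1-(a:ℝ)-β) (a) * P g (1-(a:ℝ)-β+h) (a) * P g ((a:ℝ)+(d:ℝ)) (a) * P g (1+h+(a:ℝ)+(d:ℝ)) (a) * P g (β+(d:ℝ)) (a) * P g (1+(d:ℝ)-β+h) (a) * P g (1-2*(a:ℝ)-(d:ℝ)) (a+(a+d)) * P g (h-2*(a:ℝ)-(d:ℝ)) (a+(a+d)) * P g (1-β) (a+(a+d)) * P g (h+β) (a+(a+d))) := by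
          rw [P_shift' g hs (1-h-(a:ℝ)) (a+d), show (1:ℝ)-h-(a:ℝ)+2*h = 1-(a:ℝ)+h from by ring,
              P_shift' g hs (1-2*(a:ℝ)-(d:ℝ)-h-β) (a+d),
              show 1-2*(a:ℝ)-(d:ℝ)-h-β+2*h = 1-2*(a:ℝ)-(d:ℝ)+h-β from by ring,
              P_shift' g hs (1-h+(a:ℝ)+(d:ℝ)) a, show (1:ℝ)-h+(a:ℝ)+(d:ℝ)+2*h = 1+h+(a:ℝ)+(d:ℝ) from by ring,
              P_shift' g hs (1+(d:ℝ)-h-β) a, show 1+(d:ℝ)-h-β+2*h = 1+(d:ℝ)-β+h from by ring]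
          ring
      _ = (P g (-(a:ℝ)) (a+d) * P g (1-(a:ℝ)+h) (a+d) * P g (β-2*(a:ℝ)-(d:ℝ)) (a+d) * P g (1-2*(a:ℝ)-(d:ℝ)+h-β) (a+d) * P g (1+(d:ℝ)) (a) * P g (1+(d:ℝ)+h) (a) * P g ((d:ℝ)) (a) * P g (h+(d:ℝ)) (a) * P g (β-(a:ℝ)) (a) * P g (h+β-(a:ℝ)) (a) * P g (1-(a:ℝ)-β) (a) * P g (1-(a:ℝ)-β+h) (a) * P g ((a:ℝ)+(d:ℝ)) (a) * P g (1+h+(a:ℝ)+(d:ℝ)) (a) * P g (β+(d:ℝ)) (a) * P g (1+(d:ℝ)-β+h) (a) * P g (1-2*(a:ℝ)-(d:ℝ)) (a+(a+d)) * P g (h-2*(a:ℝ)-(d:ℝ)) (a+(a+d)) * P g (1-β) (a+(a+d)) * P g (h+β) (a+(a+d))) := by rw [hsq, hsq, one_mul, one_mul]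
      _ = P g (β-2*(a:ℝ)-(d:ℝ)) (a+(a+d)) * P g (β+(d:ℝ)) (a) * P g (h+β-(a:ℝ)) (a+d+(a+a)) * P g (1-(a:ℝ)-β) (a+(a+(a+d))) * P g (1-2*(a:ℝ)-(d:ℝ)+h-β) (a+(a+d)) * P g (1+(d:ℝ)-β+h) (a) * P g (1-2*(a:ℝ)-(d:ℝ)) (a+(a+d)) * P g (-(a:ℝ)) (a+(a+(a+d))) * P g (1+(d:ℝ)) (a) * P g (h-2*(a:ℝ)-(d:ℝ)) (a+(a+d)) * P g (1-(a:ℝ)+h) (a+(a+(a+d))) * P g (h+(d:ℝ)) (a) := by rw [hc1R, hc3R, hc4R, hc5R, hc8R, hc11R]; ring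
  rw [div_mul_div_comm, div_mul_div_comm, div_eq_div_iff (by apply_rules [mul_ne_zero, hP]) (by apply_rules [mul_ne_zero, hP])]
  rw [hL]; linear_combination -hR

end BBaux

open BBaux in
set_option maxHeartbeats 2000000 in
/-- the boundary bootstrap identity
`K_{a+b}(θ) = K_b(θ - iπa/(n+1)) · S_{a,b}(2θ + iπ(b-a)/(n+1)) · K_a(θ + iπb/(n+1))`
for `1 ≤ a ≤ b` with `a + b ≤ n`, as an identity of meromorphic functions (stated at
every `θ` where no relevant sine vanishes). -/
theorem boundary_bootstrap (n a b : ℕ) (B : ℝ) (ha : 1 ≤ a) (hab : a ≤ b)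
    (hn : a + b ≤ n) (θ : ℂ)
    (hθ : ∀ x : ℝ, Complex.sin (θ / (2 * Complex.I) + (x : ℂ)) ≠ 0 ∧
      Complex.sin (θ / Complex.I + (x : ℂ)) ≠ 0) :
    Kref n B (a + b) θ =
      Kref n B b (θ - Real.pi * Complex.I * a / (n + 1)) *
        Sab n B a b (2 * θ + Real.pi * Complex.I * ((b : ℂ) - a) / (n + 1)) *
        Kref n B a (θ + Real.pi * Complex.I * b / (n + 1)) := by
  obtain ⟨d, rfl⟩ : ∃ d, b = a + d := ⟨b - a, by omega⟩
  clear ha hab hn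
  have hn0 : ((n:ℝ)+1) ≠ 0 := by positivity
  have hnC : ((n:ℂ)+1) ≠ 0 := Nat.cast_add_one_ne_zero n
  set g : ℝ → ℂ := fun x => Complex.sin (θ / (2 * Complex.I) + ((Real.pi * x / (2 * ((n:ℝ)+1)) : ℝ) : ℂ)) with hgdef
  have hsin : ∀ w : ℝ, Complex.sin (θ / (2 * Complex.I) + ((Real.pi * w / (2 * ((n:ℝ)+1)) : ℝ) : ℂ)) = g w := fun w => by rw [hgdef]
  have hg0 : ∀ x : ℝ, g x ≠ 0 := fun x => by rw [hgdef]; exact (hθ _).1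
  have hs : ∀ x : ℝ, g (x + 2*((n:ℝ)+1)) = - g x := by
    intro x
    rw [hgdef]
    show Complex.sin _ = - Complex.sin _
    rw [show (Real.pi * (x + 2*((n:ℝ)+1)) / (2*((n:ℝ)+1)) : ℝ) = Real.pi * x / (2*((n:ℝ)+1)) + Real.pi from by field_simp]
    rw [Complex.ofReal_add, ← add_assoc, Complex.sin_add_pi]
  have hcos : ∀ w : ℝ, Complex.cos (θ / (2 * Complex.I) + ((Real.pi * w / (2 * ((n:ℝ)+1)) : ℝ) : ℂ)) = g (w + ((n:ℝ)+1)) := by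
    intro w
    rw [hgdef]
    show _ = Complex.sin _
    rw [show (Real.pi * (w + ((n:ℝ)+1)) / (2*((n:ℝ)+1)) : ℝ) = Real.pi * w / (2*((n:ℝ)+1)) + Real.pi/2 from by field_simp]
    rw [Complex.ofReal_add, ← add_assoc, show ((Real.pi/2 : ℝ):ℂ) = (Real.pi:ℂ)/2 from by push_cast; ring,
        Complex.sin_add_pi_div_two]
  -- block lemmas
  have hblk0 : ∀ x : ℝ, blk (n+1) x θ = g (x + 0) / g (-x + 0) := by
    intro x
    rw [hgdef]; unfold blk
    rw [show θ / (2 * Complex.I) + ((Real.pi * x / (2 * ((n+1 : ℕ):ℝ)) : ℝ) : ℂ)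
          = θ / (2 * Complex.I) + ((Real.pi * (x + 0) / (2 * ((n:ℝ)+1)) : ℝ) : ℂ) from by push_cast; ring,
        show θ / (2 * Complex.I) - ((Real.pi * x / (2 * ((n+1 : ℕ):ℝ)) : ℝ) : ℂ)
          = θ / (2 * Complex.I) + ((Real.pi * (-x + 0) / (2 * ((n:ℝ)+1)) : ℝ) : ℂ) from by push_cast; ring]
  have hblkb : ∀ x : ℝ, blk (n+1) x (θ - Real.pi * Complex.I * (a:ℂ) / ((n:ℂ) + 1)) = g (x + -(a:ℝ)) / g (-x + -(a:ℝ)) := by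
    intro x
    rw [hgdef]; unfold blk
    rw [show (θ - Real.pi * Complex.I * (a:ℂ) / ((n:ℂ) + 1)) / (2 * Complex.I) + ((Real.pi * x / (2 * ((n+1 : ℕ):ℝ)) : ℝ) : ℂ)
          = θ / (2 * Complex.I) + ((Real.pi * (x + -(a:ℝ)) / (2 * ((n:ℝ)+1)) : ℝ) : ℂ) from by
          push_cast; field_simp; ring,
        show (θ - Real.pi * Complex.I * (a:ℂ) / ((n:ℂ) + 1)) / (2 * Complex.I) - ((Real.pi * x / (2 * ((n+1 : ℕ):ℝ)) : ℝ) : ℂ)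
          = θ / (2 * Complex.I) + ((Real.pi * (-x + -(a:ℝ)) / (2 * ((n:ℝ)+1)) : ℝ) : ℂ) from by
          push_cast; field_simp; ring]
  have hblka : ∀ x : ℝ, blk (n+1) x (θ + Real.pi * Complex.I * ((a+d : ℕ):ℂ) / ((n:ℂ) + 1)) = g (x + ((a:ℝ)+(d:ℝ))) / g (-x + ((a:ℝ)+(d:ℝ))) := by
    intro x
    rw [hgdef]; unfold blk
    rw [show (θ + Real.pi * Complex.I * ((a+d : ℕ):ℂ) / ((n:ℂ) + 1)) / (2 * Complex.I) + ((Real.pi * x / (2 * ((n+1 : ℕ):ℝ)) : ℝ) : ℂ)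
          = θ / (2 * Complex.I) + ((Real.pi * (x + ((a:ℝ)+(d:ℝ))) / (2 * ((n:ℝ)+1)) : ℝ) : ℂ) from by
          push_cast; field_simp; ring,
        show (θ + Real.pi * Complex.I * ((a+d : ℕ):ℂ) / ((n:ℂ) + 1)) / (2 * Complex.I) - ((Real.pi * x / (2 * ((n+1 : ℕ):ℝ)) : ℝ) : ℂ)
          = θ / (2 * Complex.I) + ((Real.pi * (-x + ((a:ℝ)+(d:ℝ))) / (2 * ((n:ℝ)+1)) : ℝ) : ℂ) from by
          push_cast; field_simp; ring]
  -- S-matrix block lemma via double angle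
  have key2 : ∀ (y w : ℝ), (d:ℝ) + y = 2*w → (2 * θ + Real.pi * Complex.I * (((a+d : ℕ):ℂ) - (a:ℂ)) / ((n:ℂ) + 1)) / (2 * Complex.I) + ((Real.pi * y / (2 * ((n+1 : ℕ):ℝ)) : ℝ) : ℂ)
      = 2*(θ / (2 * Complex.I) + ((Real.pi * w / (2 * ((n:ℝ)+1)) : ℝ) : ℂ)) := by
    intro y w hw
    obtain rfl : w = ((d:ℝ) + y)/2 := by linarith
    push_cast; field_simp; ring
  have key2m : ∀ (y w : ℝ), (d:ℝ) - y = 2*w → (2 * θ + Real.pi * Complex.I * (((a+d : ℕ):ℂ) - (a:ℂ)) / ((n:ℂ) + 1)) / (2 * Complex.I) - ((Real.pi * y / (2 * ((n+1 : ℕ):ℝ)) : ℝ) : ℂ)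
      = 2*(θ / (2 * Complex.I) + ((Real.pi * w / (2 * ((n:ℝ)+1)) : ℝ) : ℂ)) := by
    intro y w hw
    obtain rfl : w = ((d:ℝ) - y)/2 := by linarith
    push_cast; field_simp; ring
  have hblkS : ∀ (x ss tt : ℝ), (d:ℝ) + x = 2*ss → (d:ℝ) - x = 2*tt →
      blk (n+1) x (2 * θ + Real.pi * Complex.I * (((a+d : ℕ):ℂ) - (a:ℂ)) / ((n:ℂ) + 1)) = (g ss * g (ss + ((n:ℝ)+1))) / (g tt * g (tt + ((n:ℝ)+1))) := by
    intro x ss tt hx ht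
    unfold blk
    rw [key2 x ss hx, key2m x tt ht, Complex.sin_two_mul, Complex.sin_two_mul, hsin, hsin, hcos, hcos,
        mul_assoc, mul_assoc, mul_div_mul_left _ _ (two_ne_zero)]
  have redL : Kref n B (a+(a+d)) (θ) =
      (P g (0) (a+(a+d)) * P g (1-((n:ℝ)+1)) (a+(a+d)) * P g (B/2-2*(a:ℝ)-(d:ℝ)) (a+(a+d)) * P g (1-2*(a:ℝ)-(d:ℝ)-((n:ℝ)+1)-B/2) (a+(a+d))) /
      (P g (1-2*(a:ℝ)-(d:ℝ)) (a+(a+d)) * P g (((n:ℝ)+1)-2*(a:ℝ)-(d:ℝ)) (a+(a+d)) * P g (1-B/2) (a+(a+d)) * P g (((n:ℝ)+1)+B/2) (a+(a+d))) :=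
    Kred n (a+(a+d)) B (θ) g (0) hblk0 _ _ _ _ _ _ _ _
      (by push_cast; ring) (by push_cast; ring) (by push_cast; ring) (by push_cast; ring) (by push_cast; ring) (by push_cast; ring) (by push_cast; ring) (by push_cast; ring)
  have redKb : Kref n B (a+d) (θ - Real.pi * Complex.I * (a:ℂ) / ((n:ℂ) + 1)) =
      (P g (-(a:ℝ)) (a+d) * P g (1-((n:ℝ)+1)-(a:ℝ)) (a+d) * P g (B/2-2*(a:ℝ)-(d:ℝ)) (a+d) * P g (1-2*(a:ℝ)-(d:ℝ)-((n:ℝ)+1)-B/2) (a+d)) /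
      (P g (1-2*(a:ℝ)-(d:ℝ)) (a+d) * P g (((n:ℝ)+1)-2*(a:ℝ)-(d:ℝ)) (a+d) * P g (1-(a:ℝ)-B/2) (a+d) * P g (((n:ℝ)+1)+B/2-(a:ℝ)) (a+d)) :=
    Kred n (a+d) B (θ - Real.pi * Complex.I * (a:ℂ) / ((n:ℂ) + 1)) g (-(a:ℝ)) hblkb _ _ _ _ _ _ _ _
      (by push_cast; ring) (by push_cast; ring) (by push_cast; ring) (by push_cast; ring) (by push_cast; ring) (by push_cast; ring) (by push_cast; ring) (by push_cast; ring)
  have redKa : Kref n B (a) (θ + Real.pi * Complex.I * ((a+d : ℕ):ℂ) / ((n:ℂ) + 1)) =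
      (P g ((a:ℝ)+(d:ℝ)) (a) * P g (1-((n:ℝ)+1)+(a:ℝ)+(d:ℝ)) (a) * P g (B/2+(d:ℝ)) (a) * P g (1+(d:ℝ)-((n:ℝ)+1)-B/2) (a)) /
      (P g (1+(d:ℝ)) (a) * P g (((n:ℝ)+1)+(d:ℝ)) (a) * P g (1+(a:ℝ)+(d:ℝ)-B/2) (a) * P g (((n:ℝ)+1)+B/2+(a:ℝ)+(d:ℝ)) (a)) :=
    Kred n (a) B (θ + Real.pi * Complex.I * ((a+d : ℕ):ℂ) / ((n:ℂ) + 1)) g ((a:ℝ)+(d:ℝ)) hblka _ _ _ _ _ _ _ _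
      (by push_cast; ring) (by push_cast; ring) (by push_cast; ring) (by push_cast; ring) (by push_cast; ring) (by push_cast; ring) (by push_cast; ring) (by push_cast; ring)
  have hfacS : ∀ m ∈ Finset.range a,
      blk (n+1) ((((a+d : ℕ):ℝ) - (a:ℝ) + 1 + 2 * (m:ℝ)) + 1) (2 * θ + Real.pi * Complex.I * (((a+d : ℕ):ℂ) - (a:ℂ)) / ((n:ℂ) + 1)) *
        blk (n+1) ((((a+d : ℕ):ℝ) - (a:ℝ) + 1 + 2 * (m:ℝ)) - 1) (2 * θ + Real.pi * Complex.I * (((a+d : ℕ):ℂ) - (a:ℂ)) / ((n:ℂ) + 1)) *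
        blk (n+1) (-(((a+d : ℕ):ℝ) - (a:ℝ) + 1 + 2 * (m:ℝ)) - 1 + B) (2 * θ + Real.pi * Complex.I * (((a+d : ℕ):ℂ) - (a:ℂ)) / ((n:ℂ) + 1)) *
        blk (n+1) (-(((a+d : ℕ):ℝ) - (a:ℝ) + 1 + 2 * (m:ℝ)) + 1 - B) (2 * θ + Real.pi * Complex.I * (((a+d : ℕ):ℂ) - (a:ℂ)) / ((n:ℂ) + 1))
      = (g ((d:ℝ)+1+(m:ℝ)) * g ((d:ℝ)+1+(m:ℝ) + ((n:ℝ)+1)) * (g ((d:ℝ)+(m:ℝ)) * g ((d:ℝ)+(m:ℝ) + ((n:ℝ)+1))) *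
          (g (B/2-1-(m:ℝ)) * g (B/2-1-(m:ℝ) + ((n:ℝ)+1))) * (g (-(m:ℝ)-B/2) * g (-(m:ℝ)-B/2 + ((n:ℝ)+1)))) /
        (g (-1-(m:ℝ)) * g (-1-(m:ℝ) + ((n:ℝ)+1)) * (g (-(m:ℝ)) * g (-(m:ℝ) + ((n:ℝ)+1))) *
          (g ((d:ℝ)+1+(m:ℝ)-B/2) * g ((d:ℝ)+1+(m:ℝ)-B/2 + ((n:ℝ)+1))) * (g ((d:ℝ)+(m:ℝ)+B/2) * g ((d:ℝ)+(m:ℝ)+B/2 + ((n:ℝ)+1)))) := by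
    intro m _
    rw [hblkS _ ((d:ℝ)+1+(m:ℝ)) (-1-(m:ℝ)) (by push_cast; ring) (by push_cast; ring),
        hblkS _ ((d:ℝ)+(m:ℝ)) (-(m:ℝ)) (by push_cast; ring) (by push_cast; ring),
        hblkS _ (B/2-1-(m:ℝ)) ((d:ℝ)+1+(m:ℝ)-B/2) (by push_cast; ring) (by push_cast; ring),
        hblkS _ (-(m:ℝ)-B/2) ((d:ℝ)+(m:ℝ)+B/2) (by push_cast; ring) (by push_cast; ring),
        div_mul_div_comm, div_mul_div_comm, div_mul_div_comm]
  have redS : Sab n B a (a+d) (2 * θ + Real.pi * Complex.I * (((a+d : ℕ):ℂ) - (a:ℂ)) / ((n:ℂ) + 1)) =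
      (P g (1+(d:ℝ)) a * P g (1+(d:ℝ)+((n:ℝ)+1)) a * P g ((d:ℝ)) a * P g (((n:ℝ)+1)+(d:ℝ)) a * P g (B/2-(a:ℝ)) a * P g (((n:ℝ)+1)+B/2-(a:ℝ)) a * P g (1-(a:ℝ)-B/2) a * P g (1-(a:ℝ)-B/2+((n:ℝ)+1)) a) /
      (P g (-(a:ℝ)) a * P g (((n:ℝ)+1)-(a:ℝ)) a * P g (1-(a:ℝ)) a * P g (1-(a:ℝ)+((n:ℝ)+1)) a * P g (1+(d:ℝ)-B/2) a * P g (1+(d:ℝ)-B/2+((n:ℝ)+1)) a * P g (B/2+(d:ℝ)) a * P g (((n:ℝ)+1)+B/2+(d:ℝ)) a) := by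
    unfold Sab
    rw [Finset.prod_congr rfl hfacS, Finset.prod_div_distrib]
    simp only [Finset.prod_mul_distrib]
    rw [prod_asc' g a (fun m => (d:ℝ)+1+(m:ℝ)) (1+(d:ℝ)) (fun m hm => by push_cast; ring),
        prod_asc' g a (fun m => (d:ℝ)+1+(m:ℝ) + ((n:ℝ)+1)) (1+(d:ℝ)+((n:ℝ)+1)) (fun m hm => by push_cast; ring),
        prod_asc' g a (fun m => (d:ℝ)+(m:ℝ)) ((d:ℝ)) (fun m hm => by push_cast; ring),
        prod_asc' g a (fun m => (d:ℝ)+(m:ℝ) + ((n:ℝ)+1)) (((n:ℝ)+1)+(d:ℝ)) (fun m hm => by push_cast; ring),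
        prod_desc' g a (fun m => B/2-1-(m:ℝ)) (B/2-(a:ℝ)) (fun m hm => by push_cast; ring),
        prod_desc' g a (fun m => B/2-1-(m:ℝ) + ((n:ℝ)+1)) (((n:ℝ)+1)+B/2-(a:ℝ)) (fun m hm => by push_cast; ring),
        prod_desc' g a (fun m => -(m:ℝ)-B/2) (1-(a:ℝ)-B/2) (fun m hm => by push_cast; ring),
        prod_desc' g a (fun m => -(m:ℝ)-B/2 + ((n:ℝ)+1)) (1-(a:ℝ)-B/2+((n:ℝ)+1)) (fun m hm => by push_cast; ring),
        prod_desc' g a (fun m => -1-(m:ℝ)) (-(a:ℝ)) (fun m hm => by push_cast; ring),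
        prod_desc' g a (fun m => -1-(m:ℝ) + ((n:ℝ)+1)) (((n:ℝ)+1)-(a:ℝ)) (fun m hm => by push_cast; ring),
        prod_desc' g a (fun m => -(m:ℝ)) (1-(a:ℝ)) (fun m hm => by push_cast; ring),
        prod_desc' g a (fun m => -(m:ℝ) + ((n:ℝ)+1)) (1-(a:ℝ)+((n:ℝ)+1)) (fun m hm => by push_cast; ring),
        prod_asc' g a (fun m => (d:ℝ)+1+(m:ℝ)-B/2) (1+(d:ℝ)-B/2) (fun m hm => by push_cast; ring),
        prod_asc' g a (fun m => (d:ℝ)+1+(m:ℝ)-B/2 + ((n:ℝ)+1)) (1+(d:ℝ)-B/2+((n:ℝ)+1)) (fun m hm => by push_cast; ring),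
        prod_asc' g a (fun m => (d:ℝ)+(m:ℝ)+B/2) (B/2+(d:ℝ)) (fun m hm => by push_cast; ring),
        prod_asc' g a (fun m => (d:ℝ)+(m:ℝ)+B/2 + ((n:ℝ)+1)) (((n:ℝ)+1)+B/2+(d:ℝ)) (fun m hm => by push_cast; ring)]
    ring
  rw [redL, redKb, redS, redKa]
  exact key g hg0 (((n:ℝ)+1)) (B/2) hs a d
end
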